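/- Let H_κ = K + κ E where K is Hermitian positive definite, E is Hermitian positive semidefinite, and κ > 0. Write H_κ in block form with respect to the decomposition ℂⁿ = ker(E) ⊕ ker(E)^⊥ as H_κ = [[L, R*],[R, W + κ E₂]] where E₂ (the compression of E to ker(E)^⊥) is positive definite, and let D_κ = diag(L, W + κE₂). Then ‖D_κ^{-1/2}(D_κ − H_κ)D_κ^{-1/2}‖₂ ≤ C/√κ for some constant C independent of κ, for all κ sufficiently large. -/

import Mathlib

open Matrix
open scoped ComplexOrder

noncomputable def specNorm {n : Type*} [Fintype n] [DecidableEq n] (A : Matrix n n ℂ) : ℝ :=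
  ‖Matrix.toEuclideanCLM (𝕜 := ℂ) A‖

noncomputable def frobNorm {m k : Type*} [Fintype m] [Fintype k] (A : Matrix m k ℂ) : ℝ :=
  Real.sqrt (∑ i, ∑ j, ‖A i j‖ ^ 2)

noncomputable def psqrt {n : Type*} [Fintype n] [DecidableEq n] {A : Matrix n n ℂ}
    (hA : A.PosDef) : Matrix n n ℂ :=
  hA.posSemidef.1.eigenvectorUnitary.1 * diagonal ((↑) ∘ Real.sqrt ∘ hA.posSemidef.1.eigenvalues) *
    (star hA.posSemidef.1.eigenvectorUnitary : Matrix n n ℂ)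

/-!
Scaling the off-diagonal part `-fromBlocks 0 Rᴴ R 0` of `H_κ` on both sides by
`D_κ^{-1/2} = diag(L^{-1/2}, M^{-1/2})`, where `M = W + κE₂`, gives the antidiagonal matrix with
blocks `L^{-1/2} Rᴴ M^{-1/2}` and `M^{-1/2} R L^{-1/2}`; its norm is at most
`(‖L^{-1/2} Rᴴ‖ + ‖R L^{-1/2}‖) ‖M^{-1/2}‖`. Since `W ≥ 0` and `E₂ ≥ c` for some `c > 0`, we have
`M ≥ κc`, and conjugating this by `M^{-1/2}` gives `κc (M^{-1/2})² ≤ 1`, i.e.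
`‖M^{-1/2}‖ ≤ (κc)^{-1/2}`.
-/

open scoped MatrixOrder Matrix.Norms.L2Operator

section CStarAlgebra

variable {A : Type*} [CStarAlgebra A] [PartialOrder A] [StarOrderedRing A]

lemma IsStrictlyPositive.exists_pos_algebraMap_le {a : A} (ha : IsStrictlyPositive a) :
    ∃ r > 0, algebraMap ℝ A r ≤ a := by
  rcases subsingleton_or_nontrivial A with hA | hA
  · exact ⟨1, one_pos, (Subsingleton.elim _ _).le⟩
  · exact (CFC.exists_pos_algebraMap_le_iff ha.isSelfAdjoint).2 fun _ hx => ha.spectrum_pos hx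

lemma norm_sq_le_inv_of_star_mul_mul_eq_one {a t : A} {r : ℝ} (hr : 0 < r)
    (ha : algebraMap ℝ A r ≤ a) (ht : star t * a * t = 1) : ‖t‖ ^ 2 ≤ r⁻¹ := by
  have hconj : r • (star t * t) ≤ 1 := by
    calc r • (star t * t) = star t * algebraMap ℝ A r * t := by
          rw [Algebra.algebraMap_eq_smul_one, mul_smul_comm, mul_one, smul_mul_assoc]
      _ ≤ star t * a * t := star_left_conjugate_le_conjugate ha t
      _ = 1 := ht
  have hle : star t * t ≤ algebraMap ℝ A r⁻¹ := by
    rw [Algebra.algebraMap_eq_smul_one, ← inv_smul_smul₀ hr.ne' (star t * t)]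
    exact smul_le_smul_of_nonneg_left hconj (inv_nonneg.2 hr.le)
  rw [sq, ← CStarRing.norm_star_mul_self]
  exact (CStarAlgebra.norm_le_iff_le_algebraMap _ (inv_nonneg.2 hr.le)).2 hle

end CStarAlgebra

namespace Matrix

section L2OpNorm

variable {𝕜 : Type*} [RCLike 𝕜] {m n : Type*} [Fintype m] [Fintype n]

lemma l2_opNorm_le_one_of_conjTranspose_mul_self_eq_one [DecidableEq n] {X : Matrix m n 𝕜}
    (hX : Xᴴ * X = 1) : ‖X‖ ≤ 1 := by
  have hsq : ‖X‖ * ‖X‖ ≤ 1 := by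
    rw [← l2_opNorm_conjTranspose_mul_self, hX, cstar_norm_def, map_one]
    exact ContinuousLinearMap.norm_id_le
  nlinarith [norm_nonneg X]

lemma l2_opNorm_fromBlocks_zero_zero_zero_le [DecidableEq m] [DecidableEq n]
    (B : Matrix m n 𝕜) : ‖(fromBlocks 0 B 0 0 : Matrix (m ⊕ n) (m ⊕ n) 𝕜)‖ ≤ ‖B‖ := by
  set P : Matrix (m ⊕ n) m 𝕜 := fromRows 1 0
  set Q : Matrix (m ⊕ n) n 𝕜 := fromRows 0 1
  have hfac : fromBlocks 0 B 0 0 = P * B * Qᴴ := by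
    simp [P, Q, conjTranspose_fromRows_eq_fromCols_conjTranspose, fromRows_mul,
      ← fromCols_fromRows_eq_fromBlocks]
  have hP : ‖P‖ ≤ 1 := l2_opNorm_le_one_of_conjTranspose_mul_self_eq_one <| by
    simp [P, conjTranspose_fromRows_eq_fromCols_conjTranspose, fromCols_mul_fromRows]
  have hQ : ‖Q‖ ≤ 1 := l2_opNorm_le_one_of_conjTranspose_mul_self_eq_one <| by
    simp [Q, conjTranspose_fromRows_eq_fromCols_conjTranspose, fromCols_mul_fromRows]
  calc ‖fromBlocks 0 B 0 0‖ ≤ ‖P‖ * ‖B‖ * ‖Qᴴ‖ := by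
        rw [hfac]
        exact (l2_opNorm_mul _ _).trans
          (mul_le_mul_of_nonneg_right (l2_opNorm_mul _ _) (norm_nonneg _))
    _ ≤ 1 * ‖B‖ * 1 := by
        rw [l2_opNorm_conjTranspose]
        gcongr
    _ = ‖B‖ := by ring

lemma l2_opNorm_fromBlocks_zero_zero_le [DecidableEq m] [DecidableEq n]
    (B : Matrix m n 𝕜) (C : Matrix n m 𝕜) : ‖fromBlocks 0 B C 0‖ ≤ ‖B‖ + ‖C‖ := by
  have hsplit : fromBlocks 0 B C 0 = fromBlocks 0 B 0 0 + (fromBlocks 0 Cᴴ 0 0)ᴴ := by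
    simp [fromBlocks_conjTranspose, fromBlocks_add]
  rw [hsplit]
  refine (norm_add_le _ _).trans (add_le_add (l2_opNorm_fromBlocks_zero_zero_zero_le B) ?_)
  rw [l2_opNorm_conjTranspose, ← l2_opNorm_conjTranspose C]
  exact l2_opNorm_fromBlocks_zero_zero_zero_le Cᴴ

end L2OpNorm

lemma fromBlocks_mul_sub_mul_fromBlocks {α : Type*} [Ring α] {m n : Type*} [Fintype m]
    [Fintype n] (A : Matrix m m α) (B : Matrix m n α) (C : Matrix n m α) (D : Matrix n n α)
    (P : Matrix m m α) (Q : Matrix n n α) :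
    fromBlocks P 0 0 Q * (fromBlocks A 0 0 D - fromBlocks A B C D) * fromBlocks P 0 0 Q =
      -fromBlocks 0 (P * B * Q) (Q * C * P) 0 := by
  simp [fromBlocks_multiply, sub_eq_add_neg, fromBlocks_neg, fromBlocks_add, Matrix.mul_assoc]

variable {R : Type*} [Ring R] [PartialOrder R] [StarRing R] {m n : Type*}

lemma PosDef.toBlocks₁₁ {M : Matrix (m ⊕ n) (m ⊕ n) R} (hM : M.PosDef) : M.toBlocks₁₁.PosDef :=
  hM.submatrix Sum.inl_injective

lemma PosDef.toBlocks₂₂ {M : Matrix (m ⊕ n) (m ⊕ n) R} (hM : M.PosDef) : M.toBlocks₂₂.PosDef :=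
  hM.submatrix Sum.inr_injective

end Matrix

section psqrt

variable {m n : Type*} [Fintype m] [Fintype n] [DecidableEq m] [DecidableEq n]

lemma psqrt_eq_cfcSqrt {A : Matrix n n ℂ} (hA : A.PosDef) : psqrt hA = CFC.sqrt A := by
  rw [CFC.sqrt_eq_real_sqrt A hA.posSemidef.nonneg, cfcₙ_eq_cfc, hA.1.cfc_eq]
  simp [IsHermitian.cfc, psqrt]

lemma posDef_psqrt {A : Matrix n n ℂ} (hA : A.PosDef) : (psqrt hA).PosDef := by
  rw [psqrt_eq_cfcSqrt]
  exact hA.isStrictlyPositive.sqrt.posDef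

lemma psqrt_mul_self {A : Matrix n n ℂ} (hA : A.PosDef) : psqrt hA * psqrt hA = A := by
  rw [psqrt_eq_cfcSqrt]
  exact CFC.sqrt_mul_sqrt_self A hA.posSemidef.nonneg

lemma star_inv_psqrt_mul_mul_inv_psqrt {A : Matrix n n ℂ} (hA : A.PosDef) :
    star (psqrt hA)⁻¹ * A * (psqrt hA)⁻¹ = 1 := by
  have hS := posDef_psqrt hA
  have hdet := (isUnit_iff_isUnit_det _).1 hS.isUnit
  calc star (psqrt hA)⁻¹ * A * (psqrt hA)⁻¹
      = (psqrt hA)⁻¹ * (psqrt hA * psqrt hA) * (psqrt hA)⁻¹ := by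
        rw [star_eq_conjTranspose, conjTranspose_nonsing_inv, hS.1.eq, psqrt_mul_self]
    _ = 1 := by
        rw [← Matrix.mul_assoc, nonsing_inv_mul _ hdet, Matrix.one_mul, mul_nonsing_inv _ hdet]

lemma psqrt_fromBlocks_zero {A : Matrix m m ℂ} {D : Matrix n n ℂ} (hA : A.PosDef)
    (hD : D.PosDef) (hAD : (fromBlocks A 0 0 D).PosDef) :
    psqrt hAD = fromBlocks (psqrt hA) 0 0 (psqrt hD) := by
  obtain ⟨_⟩ := (posDef_psqrt hA).isUnit.nonempty_invertible
  have hnonneg : (fromBlocks (psqrt hA) 0 0 (psqrt hD)).PosSemidef := by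
    simpa using (PosDef.fromBlocks₁₁ 0 _ (posDef_psqrt hA)).2
      (by simpa using (posDef_psqrt hD).posSemidef)
  rw [psqrt_eq_cfcSqrt]
  refine CFC.sqrt_unique ?_ hnonneg.nonneg
  simp [fromBlocks_multiply, psqrt_mul_self]

lemma inv_psqrt_fromBlocks_zero {A : Matrix m m ℂ} {D : Matrix n n ℂ} (hA : A.PosDef)
    (hD : D.PosDef) (hAD : (fromBlocks A 0 0 D).PosDef) :
    (psqrt hAD)⁻¹ = fromBlocks (psqrt hA)⁻¹ 0 0 (psqrt hD)⁻¹ := by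
  rw [psqrt_fromBlocks_zero hA hD, inv_fromBlocks_zero₁₂_of_isUnit_iff]
  · simp
  · simp [(posDef_psqrt hA).isUnit, (posDef_psqrt hD).isUnit]

lemma norm_inv_psqrt_le {M : Matrix n n ℂ} (hM : M.PosDef) {r : ℝ} (hr : 0 < r)
    (hrM : algebraMap ℝ _ r ≤ M) : ‖(psqrt hM)⁻¹‖ ≤ 1 / √r := by
  rw [one_div, ← Real.sqrt_inv, Real.le_sqrt (norm_nonneg _) (inv_nonneg.2 hr.le)]
  exact norm_sq_le_inv_of_star_mul_mul_eq_one hr hrM (star_inv_psqrt_mul_mul_inv_psqrt hM)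

end psqrt

theorem stmt_15 {k m : ℕ} (L : Matrix (Fin k) (Fin k) ℂ)
    (W : Matrix (Fin m) (Fin m) ℂ) (R : Matrix (Fin m) (Fin k) ℂ)
    (E₂ : Matrix (Fin m) (Fin m) ℂ)
    (hK : (Matrix.fromBlocks L Rᴴ R W).PosDef) (hE₂ : E₂.PosDef) :
    ∃ C > (0 : ℝ), ∃ κ₀ > (0 : ℝ), ∀ κ : ℝ, κ₀ ≤ κ →
      ∀ hD : (Matrix.fromBlocks L 0 0 (W + (κ : ℂ) • E₂)).PosDef,
        specNorm ((psqrt hD)⁻¹ *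
            (Matrix.fromBlocks L 0 0 (W + (κ : ℂ) • E₂) -
              Matrix.fromBlocks L Rᴴ R (W + (κ : ℂ) • E₂)) *
            (psqrt hD)⁻¹) ≤ C / Real.sqrt κ := by
  have hL : L.PosDef := by simpa using hK.toBlocks₁₁
  have hW : W.PosDef := by simpa using hK.toBlocks₂₂
  obtain ⟨c, hc, hcE⟩ := hE₂.isStrictlyPositive.exists_pos_algebraMap_le
  set T₁ := (psqrt hL)⁻¹
  refine ⟨(‖T₁ * Rᴴ‖ + ‖R * T₁‖ + 1) / √c, by positivity, 1, one_pos, fun κ hκ hD => ?_⟩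
  have hκ₀ : 0 < κ := one_pos.trans_le hκ
  have hM : (W + (κ : ℂ) • E₂).PosDef := by simpa using hD.toBlocks₂₂
  set T₂ := (psqrt hM)⁻¹
  have hMc : algebraMap ℝ _ (κ * c) ≤ W + (κ : ℂ) • E₂ :=
    calc algebraMap ℝ _ (κ * c) = κ • algebraMap ℝ _ c := by rw [map_mul, ← Algebra.smul_def]
      _ ≤ κ • E₂ := smul_le_smul_of_nonneg_left hcE hκ₀.le
      _ ≤ W + κ • E₂ := le_add_of_nonneg_left hW.posSemidef.nonneg
      _ = W + (κ : ℂ) • E₂ := by simp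
  have hT₂ : ‖T₂‖ ≤ 1 / √(κ * c) := norm_inv_psqrt_le hM (by positivity) hMc
  rw [specNorm, ← cstar_norm_def, inv_psqrt_fromBlocks_zero hL hM,
    fromBlocks_mul_sub_mul_fromBlocks, norm_neg]
  calc _ ≤ ‖T₁ * Rᴴ * T₂‖ + ‖T₂ * R * T₁‖ := l2_opNorm_fromBlocks_zero_zero_le _ _
    _ ≤ ‖T₁ * Rᴴ‖ * ‖T₂‖ + ‖T₂‖ * ‖R * T₁‖ := by
        rw [Matrix.mul_assoc T₂]
        exact add_le_add (l2_opNorm_mul _ _) (l2_opNorm_mul _ _)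
    _ = (‖T₁ * Rᴴ‖ + ‖R * T₁‖) * ‖T₂‖ := by ring
    _ ≤ (‖T₁ * Rᴴ‖ + ‖R * T₁‖ + 1) * (1 / √(κ * c)) :=
        mul_le_mul (le_add_of_nonneg_right zero_le_one) hT₂ (norm_nonneg _) (by positivity)
    _ = (‖T₁ * Rᴴ‖ + ‖R * T₁‖ + 1) / √c / √κ := by
        rw [Real.sqrt_mul hκ₀.le]
        field_simp
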